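/- Let 𝒱 be a non-empty set of subspaces of ℝ^d, for each V ∈ 𝒱 let 𝒰(V) be a non-empty set of subspaces of ℝ^d, and let γ ∈ ℝ. Then: (1) if there exists V ∈ 𝒱 such that D2(γ,U) holds uniformly for all U ∈ 𝒰(V), then γ ≤ sup_{V∈𝒱} inf_{U∈𝒰(V)} β̲(U); (2) if γ < sup_{V∈𝒱} inf_{U∈𝒰(V)} β̲(U), then there exists V ∈ 𝒱 such that D2(γ,U) holds uniformly for all U ∈ 𝒰(V). -/
import Mathlib


open Set Filter Topology

noncomputable section

abbrev Euc (d : ℕ) := EuclideanSpace ℝ (Fin d)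

/-- The solution `x(n, x₀)` of `x(n+1) = A(n) x(n)`, `x(0,x₀) = x₀`. -/
def sol {d : ℕ} (A : ℕ → (Euc d ≃L[ℝ] Euc d)) : ℕ → Euc d → Euc d
  | 0, x => x
  | n + 1, x => A n (sol A n x)

/-- Boundedness of the coefficients `A(n)` and their inverses. -/
def BddSys {d : ℕ} (A : ℕ → (Euc d ≃L[ℝ] Euc d)) : Prop :=
  (∃ c : ℝ, ∀ n : ℕ, ‖(A n : Euc d →L[ℝ] Euc d)‖ ≤ c) ∧
  (∃ c : ℝ, ∀ n : ℕ, ‖((A n).symm : Euc d →L[ℝ] Euc d)‖ ≤ c)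

/-- `D2(γ,U)` holds uniformly (constant `C`). -/
def D2u {d : ℕ} (A : ℕ → (Euc d ≃L[ℝ] Euc d)) (γ : ℝ) (U : Submodule ℝ (Euc d)) : Prop :=
  ∃ C : ℝ, 0 < C ∧
    ∀ m n : ℕ, m ≤ n → ∀ x₀ ∈ U,
      C * Real.exp (γ * ((n : ℝ) - (m : ℝ))) * ‖sol A m x₀‖ ≤ ‖sol A n x₀‖

/-- Lower Bohl exponent `β̲(U)` (with the convention `sInf ∅ = +∞` in `EReal`). -/
def lowerBohl {d : ℕ} (A : ℕ → (Euc d ≃L[ℝ] Euc d)) (U : Submodule ℝ (Euc d)) : EReal :=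
  ⨆ N : ℕ, sInf {r : EReal | ∃ m n : ℕ, ∃ x₀ ∈ U, x₀ ≠ 0 ∧ N < n - m ∧
    r = ((((n : ℝ) - (m : ℝ))⁻¹ * Real.log (‖sol A n x₀‖ / ‖sol A m x₀‖) : ℝ) : EReal)}

lemma sol_zero {d : ℕ} (A : ℕ → (Euc d ≃L[ℝ] Euc d)) (n : ℕ) : sol A n (0 : Euc d) = 0 := by
  induction n with
  | zero => rfl
  | succ n ih => simp [sol, ih]

lemma sol_ne_zero {d : ℕ} (A : ℕ → (Euc d ≃L[ℝ] Euc d)) (n : ℕ) {x : Euc d} (hx : x ≠ 0) :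
    sol A n x ≠ 0 := by
  induction n with
  | zero => exact hx
  | succ n ih =>
    intro h
    have : (A n) (sol A n x) = (A n) 0 := by simpa [sol, map_zero] using h
    exact ih ((A n).injective this)

lemma sol_backward {d : ℕ} (A : ℕ → (Euc d ≃L[ℝ] Euc d)) {c : ℝ}
    (hc : ∀ n : ℕ, ‖((A n).symm : Euc d →L[ℝ] Euc d)‖ ≤ c) (hc1 : 1 ≤ c)
    (m k : ℕ) (x : Euc d) : ‖sol A m x‖ ≤ c ^ k * ‖sol A (m + k) x‖ := by
  induction k with
  | zero => simp
  | succ k ih =>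
    have h1 : ‖sol A (m + k) x‖ ≤ c * ‖sol A (m + k + 1) x‖ := by
      have : sol A (m + k) x = (A (m + k)).symm (sol A (m + k + 1) x) := by
        simp [sol]
      rw [this]
      calc ‖(A (m + k)).symm (sol A (m + k + 1) x)‖
          ≤ ‖((A (m + k)).symm : Euc d →L[ℝ] Euc d)‖ * ‖sol A (m + k + 1) x‖ :=
            ((A (m + k)).symm : Euc d →L[ℝ] Euc d).le_opNorm _
        _ ≤ c * ‖sol A (m + k + 1) x‖ := by
            gcongr
            exact hc _
    calc ‖sol A m x‖ ≤ c ^ k * ‖sol A (m + k) x‖ := ih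
      _ ≤ c ^ k * (c * ‖sol A (m + k + 1) x‖) := by
          gcongr
      _ = c ^ (k + 1) * ‖sol A (m + (k + 1)) x‖ := by ring_nf

lemma le_lowerBohl_of_D2u {d : ℕ} {A : ℕ → (Euc d ≃L[ℝ] Euc d)} {γ : ℝ}
    {U : Submodule ℝ (Euc d)} (h : D2u A γ U) : (γ : EReal) ≤ lowerBohl A U := by
  obtain ⟨C, hC, hD⟩ := h
  rw [← EReal.ge_of_forall_gt_iff_ge]
  intro z hz
  rw [EReal.coe_lt_coe_iff] at hz
  set ε : ℝ := γ - z with hε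
  have hεpos : 0 < ε := by linarith
  set N : ℕ := ⌈|Real.log C| / ε⌉₊ with hN
  refine le_trans ?_ (le_iSup _ N)
  apply le_sInf
  rintro r ⟨m, n, x₀, hx₀U, hx₀, hnm, rfl⟩
  rw [EReal.coe_le_coe_iff]
  have hmn : m < n := by omega
  have hkeq : ((n : ℝ) - (m : ℝ)) = ((n - m : ℕ) : ℝ) := by
    push_cast [Nat.cast_sub hmn.le]; ring
  set k : ℝ := (n : ℝ) - (m : ℝ) with hkdef
  have hkpos : 0 < k := by
    rw [hkeq]
    have : 0 < n - m := by omega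
    exact_mod_cast this
  have hkN : (N : ℝ) < k := by rw [hkeq]; exact_mod_cast hnm
  have hNge : |Real.log C| / ε ≤ N := Nat.le_ceil _
  have habs : |Real.log C| ≤ ε * k := by
    rw [div_le_iff₀ hεpos] at hNge
    calc |Real.log C| ≤ ↑N * ε := hNge
      _ ≤ k * ε := by gcongr
      _ = ε * k := mul_comm _ _
  have hxm : 0 < ‖sol A m x₀‖ := norm_pos_iff.mpr (sol_ne_zero A m hx₀)
  have hxn : 0 < ‖sol A n x₀‖ := norm_pos_iff.mpr (sol_ne_zero A n hx₀)
  have hratio : C * Real.exp (γ * k) ≤ ‖sol A n x₀‖ / ‖sol A m x₀‖ := by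
    rw [le_div_iff₀ hxm]
    exact hD m n hmn.le x₀ hx₀U
  have hlog : Real.log C + γ * k ≤ Real.log (‖sol A n x₀‖ / ‖sol A m x₀‖) := by
    have := Real.log_le_log (by positivity) hratio
    rwa [Real.log_mul hC.ne' (Real.exp_ne_zero _), Real.log_exp] at this
  rw [le_inv_mul_iff₀ hkpos]
  have := neg_abs_le (Real.log C)
  nlinarith

lemma D2u_of_lt_lowerBohl {d : ℕ} {A : ℕ → (Euc d ≃L[ℝ] Euc d)} (hA : BddSys A) {γ : ℝ}
    {U : Submodule ℝ (Euc d)} (h : (γ : EReal) < lowerBohl A U) : D2u A γ U := by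
  obtain ⟨c, hc⟩ := hA.2
  set c' : ℝ := max c 1 with hc'def
  have hc' : ∀ n : ℕ, ‖((A n).symm : Euc d →L[ℝ] Euc d)‖ ≤ c' :=
    fun n => (hc n).trans (le_max_left _ _)
  have hc'1 : (1 : ℝ) ≤ c' := le_max_right _ _
  rw [lowerBohl, lt_iSup_iff] at h
  obtain ⟨N, hN⟩ := h
  set t : ℝ := c' * Real.exp |γ| with htdef
  have ht1 : (1 : ℝ) ≤ t := one_le_mul_of_one_le_of_one_le hc'1
    (by rw [← Real.exp_zero]; exact Real.exp_le_exp.mpr (abs_nonneg γ))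
  have htpos : (0 : ℝ) < t := lt_of_lt_of_le one_pos ht1
  refine ⟨(t ^ N)⁻¹, by positivity, ?_⟩
  intro m n hmn x₀ hx₀U
  by_cases hx : x₀ = 0
  · simp [hx, sol_zero]
  have hxm : 0 < ‖sol A m x₀‖ := norm_pos_iff.mpr (sol_ne_zero A m hx)
  have hxn : 0 < ‖sol A n x₀‖ := norm_pos_iff.mpr (sol_ne_zero A n hx)
  have hkeq : ((n : ℝ) - (m : ℝ)) = ((n - m : ℕ) : ℝ) := by
    push_cast [Nat.cast_sub hmn]; ring
  by_cases hk : N < n - m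
  · -- large gap: use the Bohl exponent estimate
    have hmem : ((((n : ℝ) - (m : ℝ))⁻¹ *
        Real.log (‖sol A n x₀‖ / ‖sol A m x₀‖) : ℝ) : EReal) ∈
        {r : EReal | ∃ m' n' : ℕ, ∃ x₀' ∈ U, x₀' ≠ 0 ∧ N < n' - m' ∧
          r = ((((n' : ℝ) - (m' : ℝ))⁻¹ *
            Real.log (‖sol A n' x₀'‖ / ‖sol A m' x₀'‖) : ℝ) : EReal)} :=
      ⟨m, n, x₀, hx₀U, hx, hk, rfl⟩
    have hγr := lt_of_lt_of_le hN (sInf_le hmem)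
    rw [EReal.coe_lt_coe_iff] at hγr
    have hkpos : 0 < (n : ℝ) - (m : ℝ) := by
      rw [hkeq]
      have : 0 < n - m := by omega
      exact_mod_cast this
    have hloggt : γ * ((n : ℝ) - (m : ℝ)) < Real.log (‖sol A n x₀‖ / ‖sol A m x₀‖) := by
      rw [lt_inv_mul_iff₀ hkpos] at hγr
      linarith [hγr]
    have hexp : Real.exp (γ * ((n : ℝ) - (m : ℝ))) ≤ ‖sol A n x₀‖ / ‖sol A m x₀‖ := by
      have h2 := (Real.exp_lt_exp.mpr hloggt).le
      rwa [Real.exp_log (by positivity)] at h2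
    have ht1' : (t ^ N)⁻¹ ≤ 1 := inv_le_one_of_one_le₀ (one_le_pow₀ ht1)
    calc (t ^ N)⁻¹ * Real.exp (γ * ((n : ℝ) - (m : ℝ))) * ‖sol A m x₀‖
        ≤ 1 * Real.exp (γ * ((n : ℝ) - (m : ℝ))) * ‖sol A m x₀‖ := by gcongr
      _ = Real.exp (γ * ((n : ℝ) - (m : ℝ))) * ‖sol A m x₀‖ := by ring
      _ ≤ (‖sol A n x₀‖ / ‖sol A m x₀‖) * ‖sol A m x₀‖ := by gcongr
      _ = ‖sol A n x₀‖ := div_mul_cancel₀ _ hxm.ne'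
  · -- small gap: use boundedness of inverses
    set k : ℕ := n - m with hkd
    have hkN : k ≤ N := by omega
    have hback : ‖sol A m x₀‖ ≤ c' ^ k * ‖sol A n x₀‖ := by
      have := sol_backward A hc' hc'1 m k x₀
      rwa [Nat.add_sub_cancel' hmn] at this
    have hexp : Real.exp (γ * ((n : ℝ) - (m : ℝ))) ≤ (Real.exp |γ|) ^ k := by
      rw [← Real.exp_nat_mul]
      apply Real.exp_le_exp.mpr
      rw [hkeq]
      calc γ * (k : ℝ) ≤ |γ| * (k : ℝ) := by
            apply mul_le_mul_of_nonneg_right (le_abs_self γ) (Nat.cast_nonneg k)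
        _ = (k : ℝ) * |γ| := mul_comm _ _
    have hkey : (t ^ N)⁻¹ * Real.exp (γ * ((n : ℝ) - (m : ℝ))) * c' ^ k ≤ 1 := by
      calc (t ^ N)⁻¹ * Real.exp (γ * ((n : ℝ) - (m : ℝ))) * c' ^ k
          ≤ (t ^ N)⁻¹ * (Real.exp |γ|) ^ k * c' ^ k := by gcongr
        _ = (t ^ N)⁻¹ * t ^ k := by rw [htdef, mul_pow]; ring
        _ ≤ (t ^ N)⁻¹ * t ^ N := by gcongr
        _ = 1 := inv_mul_cancel₀ (by positivity)
    calc (t ^ N)⁻¹ * Real.exp (γ * ((n : ℝ) - (m : ℝ))) * ‖sol A m x₀‖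
        ≤ (t ^ N)⁻¹ * Real.exp (γ * ((n : ℝ) - (m : ℝ))) * (c' ^ k * ‖sol A n x₀‖) := by gcongr
      _ = ((t ^ N)⁻¹ * Real.exp (γ * ((n : ℝ) - (m : ℝ))) * c' ^ k) * ‖sol A n x₀‖ := by ring
      _ ≤ 1 * ‖sol A n x₀‖ := by gcongr
      _ = ‖sol A n x₀‖ := one_mul _

/-- **Lower Bohl exponent and the dichotomy estimate `D2(γ,U)`.** -/
theorem lowerBohl_and_D2 {d : ℕ} (hd : 1 ≤ d)
    (A : ℕ → (Euc d ≃L[ℝ] Euc d)) (hA : BddSys A)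
    (𝒱 : Set (Submodule ℝ (Euc d))) (h𝒱 : 𝒱.Nonempty)
    (𝒰 : Submodule ℝ (Euc d) → Set (Submodule ℝ (Euc d)))
    (h𝒰 : ∀ V ∈ 𝒱, (𝒰 V).Nonempty) (γ : ℝ) :
    ((∃ V ∈ 𝒱, ∀ U ∈ 𝒰 V, D2u A γ U) →
      (γ : EReal) ≤ (⨆ V ∈ 𝒱, ⨅ U ∈ 𝒰 V, lowerBohl A U)) ∧
    ((γ : EReal) < (⨆ V ∈ 𝒱, ⨅ U ∈ 𝒰 V, lowerBohl A U) →
      ∃ V ∈ 𝒱, ∀ U ∈ 𝒰 V, D2u A γ U) := by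
  constructor
  · rintro ⟨V, hV, h⟩
    refine le_iSup₂_of_le V hV ?_
    exact le_iInf₂ fun U hU => le_lowerBohl_of_D2u (h U hU)
  · intro h
    simp only [lt_iSup_iff] at h
    obtain ⟨V, hV, hV2⟩ := h
    exact ⟨V, hV, fun U hU =>
      D2u_of_lt_lowerBohl hA (lt_of_lt_of_le hV2 (iInf₂_le U hU))⟩

end
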